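/- arXiv:2604.06349 — 2 statements merged into one kernel-verified Lean document; each statement's English description precedes it below -/
import Mathlib

section
/- (Proposition 2 of the paper, limit form: consistency of the second-order-free gradient approximation.) Let E and W be finite-dimensional real inner product spaces, let L_in : E × W → ℝ be twice continuously differentiable (C²), let L_out : W × E → ℝ be continuously differentiable (C¹), let θ₀ ∈ E and α ∈ ℝ, and define Θ*(ω) = θ₀ − α • ∇_θ L_in(θ₀, ω) and F(ω) = L_out(ω, Θ*(ω)). Fix ω ∈ W and set δ = ∇_Θ L_out(ω, Θ*(ω)) ∈ E, and for real ε ≠ 0 set θ⁺_ε = θ₀ + ε • δ and θ⁻_ε = θ₀ − ε • δ. Then the approximated gradient ∇_ω L_out(ω, Θ*(ω)) − (α/(2ε)) • (∇_ω L_in(θ⁺_ε, ω) − ∇_ω L_in(θ⁻_ε, ω)) tends to the true gradient ∇F(ω) in W as ε tends to 0 (over ε ≠ 0). -/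
/-!
The map `Θ*` has derivative `-α • B`, where `B` is the derivative of `ω' ↦ ∇_θ L_in(θ₀, ω')`,
so the chain rule gives `∇F(ω) = ∇_ω L_out(ω, Θ*(ω)) - α • B† δ`. Symmetry of the second
derivative of `L_in` identifies `B†` with the derivative `A` of `θ ↦ ∇_ω L_in(θ, ω)` at `θ₀`,
and `A δ` is the limit of the symmetric difference quotients of that map in direction `δ`.
-/

open Filter Topology RealInnerProductSpace InnerProductSpace ContinuousLinearMap

section SymmetricDifferenceQuotient

variable {V X : Type*} [NormedAddCommGroup V] [NormedSpace ℝ V]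
  [NormedAddCommGroup X] [NormedSpace ℝ X]

theorem HasDerivAt.tendsto_symmetric_slope {g : ℝ → X} {l : X} (h : HasDerivAt g l 0) :
    Tendsto (fun ε : ℝ => (2 * ε)⁻¹ • (g ε - g (-ε))) (𝓝[≠] 0) (𝓝 l) := by
  have hslope : Tendsto (slope g 0) (𝓝[≠] 0) (𝓝 l) := hasDerivAt_iff_tendsto_slope.mp h
  have hneg : Tendsto (fun ε : ℝ => -ε) (𝓝[≠] 0) (𝓝[≠] 0) := by
    have h := (neg_nhdsNE (a := (0 : ℝ))).le
    rwa [neg_zero] at h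
  have hmean := ((hslope.add (hslope.comp hneg)).const_smul (2⁻¹ : ℝ))
  rw [← two_smul ℝ l, smul_smul, inv_mul_cancel₀ two_ne_zero, one_smul] at hmean
  refine hmean.congr fun ε => ?_
  simp only [Function.comp_apply, slope_def_module, sub_zero]
  match_scalars <;> ring

theorem HasFDerivAt.tendsto_symmetric_difference_quotient {G : V → X} {G' : V →L[ℝ] X} {x : V}
    (h : HasFDerivAt G G' x) (d : V) :
    Tendsto (fun ε : ℝ => (2 * ε)⁻¹ • (G (x + ε • d) - G (x - ε • d))) (𝓝[≠] 0) (𝓝 (G' d)) := by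
  have hline : HasDerivAt (fun ε : ℝ => x + ε • d) d 0 := by
    simpa using ((hasDerivAt_id (0 : ℝ)).smul_const d).const_add x
  have hG : HasDerivAt (fun ε : ℝ => G (x + ε • d)) (G' d) 0 := by
    have h0 : HasFDerivAt G G' (x + (0 : ℝ) • d) := by simpa using h
    exact h0.comp_hasDerivAt (0 : ℝ) hline
  simpa [neg_smul, ← sub_eq_add_neg] using hG.tendsto_symmetric_slope

end SymmetricDifferenceQuotient

section PartialGradient

variable {X Y : Type*} [NormedAddCommGroup X] [InnerProductSpace ℝ X]
  [NormedAddCommGroup Y] [InnerProductSpace ℝ Y]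
  {L : X × Y → ℝ} {x : X} {y : Y}

theorem gradient_prodMk_left_eq [CompleteSpace X] (hL : DifferentiableAt ℝ L (x, y)) :
    gradient (fun x' => L (x', y)) x = (toDual ℝ X).symm (fderiv ℝ L (x, y) ∘L inl ℝ X Y) := by
  have h : HasFDerivAt (fun x' => L (x', y)) (fderiv ℝ L (x, y) ∘L inl ℝ X Y) x :=
    hL.hasFDerivAt.comp x (hasFDerivAt_prodMk_left x y)
  rw [gradient, h.fderiv]

theorem gradient_prodMk_right_eq [CompleteSpace Y] (hL : DifferentiableAt ℝ L (x, y)) :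
    gradient (fun y' => L (x, y')) y = (toDual ℝ Y).symm (fderiv ℝ L (x, y) ∘L inr ℝ X Y) := by
  have h : HasFDerivAt (fun y' => L (x, y')) (fderiv ℝ L (x, y) ∘L inr ℝ X Y) y :=
    hL.hasFDerivAt.comp y (hasFDerivAt_prodMk_right x y)
  rw [gradient, h.fderiv]

theorem inner_gradient_prodMk_left [CompleteSpace X] (hL : DifferentiableAt ℝ L (x, y)) (u : X) :
    ⟪gradient (fun x' => L (x', y)) x, u⟫ = fderiv ℝ L (x, y) (u, 0) := by
  simp [gradient_prodMk_left_eq hL, toDual_symm_apply]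

theorem inner_gradient_prodMk_right [CompleteSpace Y] (hL : DifferentiableAt ℝ L (x, y)) (v : Y) :
    ⟪gradient (fun y' => L (x, y')) y, v⟫ = fderiv ℝ L (x, y) (0, v) := by
  simp [gradient_prodMk_right_eq hL, toDual_symm_apply]

theorem gradient_comp_prodMk [CompleteSpace X] [CompleteSpace Y] {Θ : X → Y} {Θ' : X →L[ℝ] Y}
    (hL : DifferentiableAt ℝ L (x, Θ x)) (hΘ : HasFDerivAt Θ Θ' x) :
    gradient (fun x' => L (x', Θ x')) x =
      gradient (fun x' => L (x', Θ x)) x + Θ'.adjoint (gradient (fun y' => L (x, y')) (Θ x)) := by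
  have hF : HasFDerivAt (fun x' => L (x', Θ x'))
      (fderiv ℝ L (x, Θ x) ∘L (ContinuousLinearMap.id ℝ X).prod Θ') x :=
    hL.hasFDerivAt.comp x ((hasFDerivAt_id x).prodMk hΘ)
  refine ext_inner_right ℝ fun u => ?_
  rw [inner_gradient_left, hF.fderiv, inner_add_left, adjoint_inner_left,
    inner_gradient_prodMk_left hL, inner_gradient_prodMk_right hL, ← map_add]
  simp

variable {L'' : X × Y →L[ℝ] X × Y →L[ℝ] ℝ}

theorem exists_hasFDerivAt_gradient_prodMk_right [CompleteSpace Y] (hL : Differentiable ℝ L)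
    (hL'' : HasFDerivAt (fderiv ℝ L) L'' (x, y)) :
    ∃ A : X →L[ℝ] Y, HasFDerivAt (fun x' => gradient (fun y' => L (x', y')) y) A x ∧
      ∀ u v, ⟪A u, v⟫ = L'' (u, 0) (0, v) := by
  let riesz : StrongDual ℝ Y →L[ℝ] Y := (toDual ℝ Y).symm.toLinearIsometry.toContinuousLinearMap
  refine ⟨riesz ∘L (compL ℝ Y (X × Y) ℝ).flip (inr ℝ X Y) ∘L L'' ∘L inl ℝ X Y, ?_, fun u v => ?_⟩
  · have hP : HasFDerivAt (fun x' => fderiv ℝ L (x', y)) (L'' ∘L inl ℝ X Y) x :=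
      HasFDerivAt.comp (g := fderiv ℝ L) x hL'' (hasFDerivAt_prodMk_left (𝕜 := ℝ) x y)
    simp_rw [gradient_prodMk_right_eq (hL _)]
    exact (riesz ∘L (compL ℝ Y (X × Y) ℝ).flip (inr ℝ X Y)).hasFDerivAt.comp x hP
  · simp [riesz, toDual_symm_apply]

theorem exists_hasFDerivAt_gradient_prodMk_left [CompleteSpace X] (hL : Differentiable ℝ L)
    (hL'' : HasFDerivAt (fderiv ℝ L) L'' (x, y)) :
    ∃ B : Y →L[ℝ] X, HasFDerivAt (fun y' => gradient (fun x' => L (x', y')) x) B y ∧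
      ∀ v u, ⟪B v, u⟫ = L'' (0, v) (u, 0) := by
  let riesz : StrongDual ℝ X →L[ℝ] X := (toDual ℝ X).symm.toLinearIsometry.toContinuousLinearMap
  refine ⟨riesz ∘L (compL ℝ X (X × Y) ℝ).flip (inl ℝ X Y) ∘L L'' ∘L inr ℝ X Y, ?_, fun v u => ?_⟩
  · have hP : HasFDerivAt (fun y' => fderiv ℝ L (x, y')) (L'' ∘L inr ℝ X Y) y :=
      HasFDerivAt.comp (g := fderiv ℝ L) y hL'' (hasFDerivAt_prodMk_right (𝕜 := ℝ) x y)
    simp_rw [gradient_prodMk_left_eq (hL _)]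
    exact (riesz ∘L (compL ℝ X (X × Y) ℝ).flip (inl ℝ X Y)).hasFDerivAt.comp y hP
  · simp [riesz, toDual_symm_apply]

theorem adjoint_eq_of_hasFDerivAt_gradient_prodMk [CompleteSpace X] [CompleteSpace Y]
    (hL : Differentiable ℝ L) (hL'' : HasFDerivAt (fderiv ℝ L) L'' (x, y))
    (hsymm : IsSymmSndFDerivAt ℝ L (x, y))
    {A : X →L[ℝ] Y} {B : Y →L[ℝ] X}
    (hA : HasFDerivAt (fun x' => gradient (fun y' => L (x', y')) y) A x)
    (hB : HasFDerivAt (fun y' => gradient (fun x' => L (x', y')) x) B y) :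
    B.adjoint = A := by
  obtain ⟨A', hA', hA'_inner⟩ := exists_hasFDerivAt_gradient_prodMk_right hL hL''
  obtain ⟨B', hB', hB'_inner⟩ := exists_hasFDerivAt_gradient_prodMk_left hL hL''
  rw [hA.unique hA', hB.unique hB']
  ext u
  refine ext_inner_right ℝ fun v => ?_
  have h := hsymm (0, v) (u, 0)
  rw [hL''.fderiv] at h
  rw [adjoint_inner_left, real_inner_comm, hB'_inner, hA'_inner, h]

end PartialGradient

/-- Proposition 2, limit form: the second-order-free approximated gradient converges
to the true outer gradient as `ε → 0`. -/
theorem bisdg_proposition_two_limit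
    {E W : Type*}
    [NormedAddCommGroup E] [InnerProductSpace ℝ E] [FiniteDimensional ℝ E]
    [NormedAddCommGroup W] [InnerProductSpace ℝ W] [FiniteDimensional ℝ W]
    (Lin : E × W → ℝ) (hLin : ContDiff ℝ 2 Lin)
    (Lout : W × E → ℝ) (hLout : ContDiff ℝ 1 Lout)
    (θ₀ : E) (α : ℝ)
    (Θs : W → E)
    (hΘ : Θs = fun ω => θ₀ - α • gradient (fun θ' => Lin (θ', ω)) θ₀)
    (F : W → ℝ) (hF : F = fun ω => Lout (ω, Θs ω))
    (ω : W) (δ : E) (hδ : δ = gradient (fun θ' => Lout (ω, θ')) (Θs ω)) :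
    Tendsto (fun ε : ℝ =>
        gradient (fun ω' => Lout (ω', Θs ω)) ω
          - (α / (2 * ε)) • (gradient (fun ω' => Lin (θ₀ + ε • δ, ω')) ω
              - gradient (fun ω' => Lin (θ₀ - ε • δ, ω')) ω))
      (𝓝[≠] (0 : ℝ)) (𝓝 (gradient F ω)) := by
  have hLin₁ : Differentiable ℝ Lin := hLin.differentiable two_ne_zero
  have hLin₂ : HasFDerivAt (fderiv ℝ Lin) (fderiv ℝ (fderiv ℝ Lin) (θ₀, ω)) (θ₀, ω) :=
    ((hLin.fderiv_right le_rfl).differentiable one_ne_zero _).hasFDerivAt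
  obtain ⟨A, hA, -⟩ := exists_hasFDerivAt_gradient_prodMk_right hLin₁ hLin₂
  obtain ⟨B, hB, -⟩ := exists_hasFDerivAt_gradient_prodMk_left hLin₁ hLin₂
  have hBA : B.adjoint = A := adjoint_eq_of_hasFDerivAt_gradient_prodMk hLin₁ hLin₂
    (hLin.contDiffAt.isSymmSndFDerivAt (by simp)) hA hB
  have hΘs : HasFDerivAt Θs (-(α • B)) ω := by
    simpa [hΘ] using (hB.const_smul α).const_sub θ₀
  have hgradF : gradient F ω = gradient (fun ω' => Lout (ω', Θs ω)) ω - α • A δ := by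
    rw [hF, gradient_comp_prodMk (hLout.differentiable one_ne_zero _) hΘs, ← hδ]
    simp [hBA, sub_eq_add_neg]
  rw [hgradF]
  refine (tendsto_const_nhds.sub ((hA.tendsto_symmetric_difference_quotient δ).const_smul α)).congr
    fun ε => ?_
  rw [smul_smul, div_eq_mul_inv]
end

section
/- (Quantitative version of Proposition 2.) Let E and W be finite-dimensional real inner product spaces, let L_in : E × W → ℝ be twice continuously differentiable (C²), let L_out : W × E → ℝ be continuously differentiable (C¹), let θ₀ ∈ E, α ∈ ℝ, ω ∈ W, and define Θ*(ω') = θ₀ − α • ∇_θ L_in(θ₀, ω') and F(ω') = L_out(ω', Θ*(ω')). Set δ = ∇_Θ L_out(ω, Θ*(ω)), and suppose in addition there exist r > 0 and M ≥ 0 such that the map G : θ ↦ ∇_ω L_in(θ, ω) is differentiable on the open ball B(θ₀, r) with Fréchet derivative DG that is Lipschitz with constant M on B(θ₀, r). Then for every real ε ≠ 0 with |ε| • ‖δ‖ < r, the approximation error satisfies ‖(∇_ω L_out(ω, Θ*(ω)) − (α/(2ε)) • (∇_ω L_in(θ₀ + ε • δ, ω) − ∇_ω L_in(θ₀ − ε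 • δ, ω))) − ∇F(ω)‖ ≤ (|α| M / 2) • |ε| • ‖δ‖². -/
/-!
By the chain rule, `∇F(ω) = ∇_ω L_out(ω, Θ*(ω)) + (DΘ*)† δ` with `DΘ* = -α • D_ω ∇_θ L_in(θ₀, ·)`,
and by symmetry of the second derivative of `L_in` the adjoint of `D_ω ∇_θ L_in` is
`DG(θ₀) = D_θ ∇_ω L_in(·, ω)`. Hence the error is `α / (2ε)` times the central-difference error
`G(θ₀ + h) - G(θ₀ - h) - 2 DG(θ₀) h` with `h = ε • δ`. Along `t ↦ θ₀ ± t • h` the derivative of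
the first-order Taylor remainder has norm at most `M t ‖h‖²`, so each one-sided remainder is at
most `M ‖h‖² / 2`.
-/

open RealInnerProductSpace

section Taylor

variable {E F : Type*} [NormedAddCommGroup E] [NormedSpace ℝ E]
  [NormedAddCommGroup F] [NormedSpace ℝ F]
  {f : E → F} {f' : E → E →L[ℝ] F} {x h : E} {r M : ℝ}

theorem norm_sub_sub_fderiv_le_of_lipschitzAt_fderiv
    (hf : ∀ y ∈ Metric.ball x r, HasFDerivAt f (f' y) y)
    (hf' : ∀ y ∈ Metric.ball x r, ‖f' y - f' x‖ ≤ M * ‖y - x‖) (hh : ‖h‖ < r) :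
    ‖f (x + h) - f x - f' x h‖ ≤ M / 2 * ‖h‖ ^ 2 := by
  have hmem : ∀ t ∈ Set.Icc (0 : ℝ) 1, x + t • h ∈ Metric.ball x r := fun t ht => by
    rw [Metric.mem_ball, dist_eq_norm, add_sub_cancel_left, norm_smul, Real.norm_of_nonneg ht.1]
    exact (mul_le_of_le_one_left (norm_nonneg h) ht.2).trans_lt hh
  have hderiv : ∀ t ∈ Set.Icc (0 : ℝ) 1,
      HasDerivAt (fun t : ℝ => f (x + t • h) - f x - t • f' x h) ((f' (x + t • h) - f' x) h) t :=
    fun t ht => by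
      have hline : HasDerivAt (fun t : ℝ => x + t • h) h t := by
        simpa using ((hasDerivAt_id t).smul_const h).const_add x
      have := (((hf _ (hmem t ht)).comp_hasDerivAt t hline).sub_const (f x)).sub
        ((hasDerivAt_id t).smul_const (f' x h))
      exact this.congr_deriv (by simp)
  have hbound : ∀ t ∈ Set.Ico (0 : ℝ) 1, ‖(f' (x + t • h) - f' x) h‖ ≤ M * ‖h‖ ^ 2 * t :=
    fun t ht => calc
      ‖(f' (x + t • h) - f' x) h‖ ≤ ‖f' (x + t • h) - f' x‖ * ‖h‖ :=
        (f' (x + t • h) - f' x).le_opNorm h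
      _ ≤ M * ‖(x + t • h) - x‖ * ‖h‖ := by
        gcongr
        exact hf' _ (hmem t (Set.Ico_subset_Icc_self ht))
      _ = M * ‖h‖ ^ 2 * t := by
        rw [add_sub_cancel_left, norm_smul, Real.norm_of_nonneg ht.1]; ring
  have := image_norm_le_of_norm_deriv_right_le_deriv_boundary (a := 0) (b := 1)
    (B := fun t => M / 2 * ‖h‖ ^ 2 * t ^ 2) (B' := fun t => M * ‖h‖ ^ 2 * t)
    (fun t ht => (hderiv t ht).continuousAt.continuousWithinAt)
    (fun t ht => (hderiv t (Set.Ico_subset_Icc_self ht)).hasDerivWithinAt) (by simp)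
    (fun t => ((hasDerivAt_pow 2 t).const_mul _).congr_deriv (by push_cast; ring)) hbound
    (Set.right_mem_Icc.2 zero_le_one)
  simpa using this

theorem norm_sub_sub_two_smul_fderiv_le_of_lipschitzAt_fderiv
    (hf : ∀ y ∈ Metric.ball x r, HasFDerivAt f (f' y) y)
    (hf' : ∀ y ∈ Metric.ball x r, ‖f' y - f' x‖ ≤ M * ‖y - x‖) (hh : ‖h‖ < r) :
    ‖f (x + h) - f (x - h) - (2 : ℝ) • f' x h‖ ≤ M * ‖h‖ ^ 2 := by
  have hplus := norm_sub_sub_fderiv_le_of_lipschitzAt_fderiv hf hf' hh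
  have hminus := norm_sub_sub_fderiv_le_of_lipschitzAt_fderiv hf hf' (h := -h)
    (by rwa [norm_neg])
  rw [norm_neg, ← sub_eq_add_neg, map_neg] at hminus
  calc ‖f (x + h) - f (x - h) - (2 : ℝ) • f' x h‖
      = ‖(f (x + h) - f x - f' x h) - (f (x - h) - f x - -f' x h)‖ := by congr 1; module
    _ ≤ M / 2 * ‖h‖ ^ 2 + M / 2 * ‖h‖ ^ 2 := (norm_sub_le _ _).trans (add_le_add hplus hminus)
    _ = M * ‖h‖ ^ 2 := by ring

end Taylor

section PartialGradient

open ContinuousLinearMap InnerProductSpace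

variable {E W : Type*} [NormedAddCommGroup E] [InnerProductSpace ℝ E]
  [NormedAddCommGroup W] [InnerProductSpace ℝ W]

theorem HasFDerivAt.exists_toDual_symm_comp [CompleteSpace E] {X Y : Type*}
    [NormedAddCommGroup X] [NormedSpace ℝ X] [NormedAddCommGroup Y] [NormedSpace ℝ Y]
    {Φ : X → Y →L[ℝ] ℝ} {Φ' : X →L[ℝ] Y →L[ℝ] ℝ} {x : X}
    (hΦ : HasFDerivAt Φ Φ' x) (ι : E →L[ℝ] Y) :
    ∃ A : X →L[ℝ] E, HasFDerivAt (fun x => (toDual ℝ E).symm ((Φ x).comp ι)) A x ∧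
      ∀ v u, ⟪A v, u⟫ = Φ' v (ι u) := by
  set T : (Y →L[ℝ] ℝ) →L[ℝ] E :=
    ((toDual ℝ E).symm.toContinuousLinearEquiv :
      StrongDual ℝ E ≃L[ℝ] E).toContinuousLinearMap.comp ((compL ℝ E Y ℝ).flip ι)
  refine ⟨T.comp Φ', T.hasFDerivAt.comp x hΦ, fun v u => ?_⟩
  simp [T]

theorem gradient_comp_prodMk_left [CompleteSpace E] {L : E × W → ℝ} {θ : E} {w : W}
    (hL : DifferentiableAt ℝ L (θ, w)) :
    gradient (fun θ' => L (θ', w)) θ = (toDual ℝ E).symm ((fderiv ℝ L (θ, w)).comp (inl ℝ E W)) :=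
  (hasFDerivAt_iff_hasGradientAt.1 (hL.hasFDerivAt.comp θ (hasFDerivAt_prodMk_left θ w))).gradient

theorem gradient_comp_prodMk_right [CompleteSpace W] {L : E × W → ℝ} {θ : E} {w : W}
    (hL : DifferentiableAt ℝ L (θ, w)) :
    gradient (fun w' => L (θ, w')) w = (toDual ℝ W).symm ((fderiv ℝ L (θ, w)).comp (inr ℝ E W)) :=
  (hasFDerivAt_iff_hasGradientAt.1 (hL.hasFDerivAt.comp w (hasFDerivAt_prodMk_right θ w))).gradient

theorem hasFDerivAt_gradient_comp_prodMk_left_adjoint [CompleteSpace E] [CompleteSpace W]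
    {L : E × W → ℝ} (hL : ContDiff ℝ 2 L) {θ : E} {w : W} {G' : E →L[ℝ] W}
    (hG : HasFDerivAt (fun θ' => gradient (fun w' => L (θ', w')) w) G' θ) :
    HasFDerivAt (fun w' => gradient (fun θ' => L (θ', w')) θ) (adjoint G') w := by
  have hdiff : Differentiable ℝ L := hL.differentiable two_ne_zero
  have hD2 : HasFDerivAt (fderiv ℝ L) (fderiv ℝ (fderiv ℝ L) (θ, w)) (θ, w) :=
    ((hL.fderiv_right le_rfl).differentiable one_ne_zero _).hasFDerivAt
  obtain ⟨A, hA, hAinner⟩ :=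
    (hD2.comp w (hasFDerivAt_prodMk_right θ w)).exists_toDual_symm_comp (inl ℝ E W)
  obtain ⟨B, hB, hBinner⟩ :=
    (hD2.comp θ (hasFDerivAt_prodMk_left θ w)).exists_toDual_symm_comp (inr ℝ E W)
  rw [funext fun θ' => gradient_comp_prodMk_right (hdiff (θ', w))] at hG
  rw [funext fun w' => gradient_comp_prodMk_left (hdiff (θ, w'))]
  obtain rfl : G' = B := hG.unique hB
  suffices A = adjoint G' from this ▸ hA
  ext1 v
  refine ext_inner_right ℝ fun u => ?_
  rw [adjoint_inner_left, real_inner_comm (G' u) v, hAinner, hBinner]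
  exact hL.contDiffAt.isSymmSndFDerivAt (by simp) _ _

theorem gradient_comp_graph [CompleteSpace E] [CompleteSpace W] {L : W × E → ℝ} {Θ : W → E}
    {Θ' : W →L[ℝ] E} {w : W} (hL : DifferentiableAt ℝ L (w, Θ w)) (hΘ : HasFDerivAt Θ Θ' w) :
    gradient (fun w' => L (w', Θ w')) w
      = gradient (fun w' => L (w', Θ w)) w + adjoint Θ' (gradient (fun θ' => L (w, θ')) (Θ w)) := by
  have hF : HasFDerivAt (fun w' => L (w', Θ w'))
      ((fderiv ℝ L (w, Θ w)).comp ((ContinuousLinearMap.id ℝ W).prod Θ')) w :=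
    hL.hasFDerivAt.comp w ((hasFDerivAt_id w).prodMk hΘ)
  refine ext_inner_right ℝ fun v => ?_
  rw [inner_add_left, adjoint_inner_left, inner_gradient_left, hF.fderiv,
    gradient_comp_prodMk_left hL, gradient_comp_prodMk_right hL, toDual_symm_apply,
    toDual_symm_apply]
  simp [← map_add]

theorem gradient_comp_one_step_update [CompleteSpace E] [CompleteSpace W]
    {Lin : E × W → ℝ} {Lout : W × E → ℝ} {θ₀ : E} {α : ℝ} {ω : W} {Θ : W → E}
    {G' : E →L[ℝ] W} (hLin : ContDiff ℝ 2 Lin) (hLout : DifferentiableAt ℝ Lout (ω, Θ ω))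
    (hΘ : Θ = fun ω' => θ₀ - α • gradient (fun θ' => Lin (θ', ω')) θ₀)
    (hG : HasFDerivAt (fun θ => gradient (fun ω' => Lin (θ, ω')) ω) G' θ₀) :
    gradient (fun ω' => Lout (ω', Θ ω')) ω
      = gradient (fun ω' => Lout (ω', Θ ω)) ω
        - α • G' (gradient (fun θ' => Lout (ω, θ')) (Θ ω)) := by
  have hΘ' : HasFDerivAt Θ (-(α • adjoint G')) ω := by
    subst hΘ
    simpa using
      ((hasFDerivAt_gradient_comp_prodMk_left_adjoint hLin hG).const_smul α).const_sub θ₀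
  rw [gradient_comp_graph hLout hΘ']
  simp [sub_eq_add_neg]

end PartialGradient

theorem bisdg_proposition_two_quantitative_general
    {E W : Type*}
    [NormedAddCommGroup E] [InnerProductSpace ℝ E] [FiniteDimensional ℝ E]
    [NormedAddCommGroup W] [InnerProductSpace ℝ W] [FiniteDimensional ℝ W]
    (Lin : E × W → ℝ) (hLin : ContDiff ℝ 2 Lin)
    (Lout : W × E → ℝ) (hLout : ContDiff ℝ 1 Lout)
    (θ₀ : E) (α : ℝ) (ω : W)
    (Θs : W → E)
    (hΘ : Θs = fun ω' => θ₀ - α • gradient (fun θ' => Lin (θ', ω')) θ₀)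
    (F : W → ℝ) (hF : F = fun ω' => Lout (ω', Θs ω'))
    (δ : E) (hδ : δ = gradient (fun θ' => Lout (ω, θ')) (Θs ω))
    (G : E → W) (hG : G = fun θ => gradient (fun ω' => Lin (θ, ω')) ω)
    (r M : ℝ) (hr : 0 < r)
    (DG : E → E →L[ℝ] W)
    (hdiff : ∀ x ∈ Metric.ball θ₀ r, HasFDerivAt G (DG x) x)
    (hLip : ∀ x ∈ Metric.ball θ₀ r, ∀ y ∈ Metric.ball θ₀ r, ‖DG x - DG y‖ ≤ M * ‖x - y‖)
    (ε : ℝ) (hε : ε ≠ 0) (hεδ : |ε| * ‖δ‖ < r) :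
    ‖(gradient (fun ω' => Lout (ω', Θs ω)) ω
        - (α / (2 * ε)) • (G (θ₀ + ε • δ) - G (θ₀ - ε • δ)))
      - gradient F ω‖
      ≤ (|α| * M / 2) * |ε| * ‖δ‖ ^ 2 := by
  have hθ₀ : θ₀ ∈ Metric.ball θ₀ r := Metric.mem_ball_self hr
  have hgradF : gradient F ω = gradient (fun ω' => Lout (ω', Θs ω)) ω - α • DG θ₀ δ := by
    rw [hF, hδ]
    exact gradient_comp_one_step_update hLin (hLout.differentiable one_ne_zero _) hΘ
      (hG ▸ hdiff θ₀ hθ₀)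
  have hcentral := norm_sub_sub_two_smul_fderiv_le_of_lipschitzAt_fderiv hdiff
    (fun y hy => hLip y hy θ₀ hθ₀) (h := ε • δ) (by rwa [norm_smul, Real.norm_eq_abs])
  have herr : (gradient (fun ω' => Lout (ω', Θs ω)) ω
        - (α / (2 * ε)) • (G (θ₀ + ε • δ) - G (θ₀ - ε • δ))) - gradient F ω
      = -(α / (2 * ε)) • (G (θ₀ + ε • δ) - G (θ₀ - ε • δ) - (2 : ℝ) • DG θ₀ (ε • δ)) := by
    have hα : α / (2 * ε) * (2 * ε) = α := div_mul_cancel₀ α (by simpa using hε)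
    rw [hgradF, map_smul]
    linear_combination (norm := module) hα.symm • DG θ₀ δ
  rw [herr, norm_smul, norm_neg, Real.norm_eq_abs]
  calc |α / (2 * ε)| * ‖G (θ₀ + ε • δ) - G (θ₀ - ε • δ) - (2 : ℝ) • DG θ₀ (ε • δ)‖
      ≤ |α / (2 * ε)| * (M * ‖ε • δ‖ ^ 2) := by gcongr
    _ = (|α| * M / 2) * |ε| * ‖δ‖ ^ 2 := by
      rw [norm_smul, Real.norm_eq_abs, abs_div, abs_mul, abs_two]
      field_simp [abs_ne_zero.2 hε]

/-- Quantitative version of Proposition 2: error bound for the second-order-free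
gradient approximation when `θ ↦ ∇_ω L_in(θ, ω)` has a Lipschitz derivative. -/
theorem bisdg_proposition_two_quantitative
    {E W : Type*}
    [NormedAddCommGroup E] [InnerProductSpace ℝ E] [FiniteDimensional ℝ E]
    [NormedAddCommGroup W] [InnerProductSpace ℝ W] [FiniteDimensional ℝ W]
    (Lin : E × W → ℝ) (hLin : ContDiff ℝ 2 Lin)
    (Lout : W × E → ℝ) (hLout : ContDiff ℝ 1 Lout)
    (θ₀ : E) (α : ℝ) (ω : W)
    (Θs : W → E)
    (hΘ : Θs = fun ω' => θ₀ - α • gradient (fun θ' => Lin (θ', ω')) θ₀)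
    (F : W → ℝ) (hF : F = fun ω' => Lout (ω', Θs ω'))
    (δ : E) (hδ : δ = gradient (fun θ' => Lout (ω, θ')) (Θs ω))
    (G : E → W) (hG : G = fun θ => gradient (fun ω' => Lin (θ, ω')) ω)
    (r M : ℝ) (hr : 0 < r) (hM : 0 ≤ M)
    (DG : E → E →L[ℝ] W)
    (hdiff : ∀ x ∈ Metric.ball θ₀ r, HasFDerivAt G (DG x) x)
    (hLip : ∀ x ∈ Metric.ball θ₀ r, ∀ y ∈ Metric.ball θ₀ r, ‖DG x - DG y‖ ≤ M * ‖x - y‖)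
    (ε : ℝ) (hε : ε ≠ 0) (hεδ : |ε| * ‖δ‖ < r) :
    ‖(gradient (fun ω' => Lout (ω', Θs ω)) ω
        - (α / (2 * ε)) • (G (θ₀ + ε • δ) - G (θ₀ - ε • δ)))
      - gradient F ω‖
      ≤ (|α| * M / 2) * |ε| * ‖δ‖ ^ 2 :=
  bisdg_proposition_two_quantitative_general Lin hLin Lout hLout θ₀ α ω Θs hΘ F hF δ hδ G hG r M hr
    DG hdiff hLip ε hε hεδ
end
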